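/- arXiv:2504.01198 — 4 statements merged into one kernel-verified Lean document; each statement's English description precedes it below -/
import Mathlib

section
/- If c::w is an irreducible counterexample for regular expressions p and q over an alphabet Σ, where c is a character and w a string, then w is an irreducible counterexample for δ_c p and δ_c q. -/
open RegularExpression

variable {α : Type*}

/-- The derivative of a regular expression with respect to a string,
folding the Brzozowski character derivative over the string. -/
def derivs [DecidableEq α] (p : RegularExpression α) (w : List α) : RegularExpression α :=
  w.foldl RegularExpression.deriv p

/-- `w` is a counterexample for `p` and `q` if exactly one of them accepts `w`. -/
def Counterexample (p q : RegularExpression α) (w : List α) : Prop :=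
  Xor' (w ∈ p.matches') (w ∈ q.matches')

/-- A string `w` is reducible (for `p` and `q`) if `w = s ++ t ++ u` with `t` nonempty,
`L(δ_s p) = L(δ_{s++t} p)` and `L(δ_s q) = L(δ_{s++t} q)`. -/
def Reducible [DecidableEq α] (p q : RegularExpression α) (w : List α) : Prop :=
  ∃ s t u : List α, w = s ++ t ++ u ∧ t ≠ [] ∧
    (derivs p s).matches' = (derivs p (s ++ t)).matches' ∧
    (derivs q s).matches' = (derivs q (s ++ t)).matches'

/-- `Sync s p q` : `p` and `q` have no irreducible counterexample having `s` as a prefix. -/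
def Sync [DecidableEq α] (s : List α) (p q : RegularExpression α) : Prop :=
  ∀ w : List α, s <+: w → Counterexample p q w → Reducible p q w

section

variable [DecidableEq α] {p q : RegularExpression α} {c : α} {w : List α}

theorem mem_matches'_deriv_iff : w ∈ (p.deriv c).matches' ↔ c :: w ∈ p.matches' := by
  rw [← rmatch_iff_matches', ← rmatch_iff_matches', rmatch]

theorem counterexample_deriv_iff :
    Counterexample (p.deriv c) (q.deriv c) w ↔ Counterexample p q (c :: w) := by
  rw [Counterexample, Counterexample, mem_matches'_deriv_iff, mem_matches'_deriv_iff]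

-- The split `(c :: s, t, u)` works because `derivs p (c :: s)` is definitionally `derivs (p.deriv c) s`.
theorem Reducible.cons_of_deriv (h : Reducible (p.deriv c) (q.deriv c) w) :
    Reducible p q (c :: w) := by
  obtain ⟨s, t, u, rfl, ht, hp, hq⟩ := h
  exact ⟨c :: s, t, u, rfl, ht, hp, hq⟩

end

theorem irreducible_counterexample_cons [DecidableEq α] (p q : RegularExpression α)
    (c : α) (w : List α)
    (hce : Counterexample p q (c :: w)) (hirr : ¬ Reducible p q (c :: w)) :
    Counterexample (p.deriv c) (q.deriv c) w ∧ ¬ Reducible (p.deriv c) (q.deriv c) w :=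
  ⟨counterexample_deriv_iff.mpr hce, fun h => hirr h.cons_of_deriv⟩
end

section
/- If w is a counterexample of minimal length for regular expressions p and q over an alphabet Σ (i.e., w is a counterexample and no counterexample for p and q is strictly shorter), then w is an irreducible counterexample. -/
open RegularExpression

variable {α : Type*}

/-!
A minimal counterexample `w = s ++ t ++ u` cannot be reducible: since `δ_s` and `δ_{s++t}` have
the same language for both expressions, `s ++ u` is accepted exactly when `s ++ t ++ u` is, so
`s ++ u` is a strictly shorter counterexample.
-/

section Derivatives

variable [DecidableEq α]

theorem RegularExpression.mem_matches'_deriv (p : RegularExpression α) (a : α) (x : List α) :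
    x ∈ (p.deriv a).matches' ↔ a :: x ∈ p.matches' := by
  rw [← rmatch_iff_matches', ← rmatch_iff_matches']
  rfl

theorem mem_matches'_derivs (p : RegularExpression α) (s x : List α) :
    x ∈ (derivs p s).matches' ↔ s ++ x ∈ p.matches' := by
  induction s generalizing p with
  | nil => rfl
  | cons a s ih => exact (ih (p.deriv a)).trans (p.mem_matches'_deriv a _)

theorem append_append_mem_matches'_iff_of_matches'_derivs_eq {p : RegularExpression α}
    {s t : List α} (h : (derivs p s).matches' = (derivs p (s ++ t)).matches') (u : List α) :
    s ++ t ++ u ∈ p.matches' ↔ s ++ u ∈ p.matches' := by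
  rw [← mem_matches'_derivs, ← mem_matches'_derivs, h]

end Derivatives

theorem Reducible.exists_shorter_counterexample [DecidableEq α] {p q : RegularExpression α}
    {w : List α} (hce : Counterexample p q w) (hred : Reducible p q w) :
    ∃ w', Counterexample p q w' ∧ w'.length < w.length := by
  obtain ⟨s, t, u, rfl, ht, hp, hq⟩ := hred
  refine ⟨s ++ u, ?_, ?_⟩
  · unfold Counterexample at hce ⊢
    rwa [← append_append_mem_matches'_iff_of_matches'_derivs_eq hp,
      ← append_append_mem_matches'_iff_of_matches'_derivs_eq hq]
  · simp only [List.length_append]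
    have := List.length_pos_iff.mpr ht
    omega

theorem minimal_counterexample_irreducible [DecidableEq α] (p q : RegularExpression α)
    (w : List α) (hce : Counterexample p q w)
    (hmin : ∀ w' : List α, Counterexample p q w' → w.length ≤ w'.length) :
    Counterexample p q w ∧ ¬ Reducible p q w := by
  refine ⟨hce, fun hred => ?_⟩
  obtain ⟨w', hce', hlt⟩ := hred.exists_shorter_counterexample hce
  exact (hmin w' hce').not_gt hlt
end

section
/- If regular expressions p and q over an alphabet Σ satisfy L(p) ≠ L(q), then there exists an irreducible counterexample for p and q. -/
open RegularExpression

variable {α : Type*}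

lemma deriv_matches'_iff [DecidableEq α] (p : RegularExpression α) (a : α) (x : List α) :
    x ∈ (p.deriv a).matches' ↔ a :: x ∈ p.matches' := by
  rw [← rmatch_iff_matches', ← rmatch_iff_matches']
  rfl

lemma derivs_matches'_iff [DecidableEq α] (p : RegularExpression α) :
    ∀ (s x : List α), x ∈ (derivs p s).matches' ↔ s ++ x ∈ p.matches' := by
  intro s
  induction s generalizing p with
  | nil => intro x; rfl
  | cons a s ih =>
    intro x
    have : derivs p (a :: s) = derivs (p.deriv a) s := rfl
    rw [this, ih, List.cons_append, ← deriv_matches'_iff]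

theorem exists_irreducible_counterexample [DecidableEq α] (p q : RegularExpression α)
    (h : p.matches' ≠ q.matches') :
    ∃ w : List α, Counterexample p q w ∧ ¬ Reducible p q w := by
  have hne : ∃ n, ∃ w : List α, w.length = n ∧ Counterexample p q w := by
    have : ∃ w, Counterexample p q w := by
      by_contra hc
      push_neg at hc
      exact h (Set.ext fun w => by
        have := hc w; unfold Counterexample Xor' Xor at this; tauto)
    obtain ⟨w, hw⟩ := this
    exact ⟨w.length, w, rfl, hw⟩
  classical
  obtain ⟨w, hwlen, hw⟩ := Nat.find_spec hne
  refine ⟨w, hw, ?_⟩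
  rintro ⟨s, t, u, rfl, ht, hps, hqs⟩
  have hsu : Counterexample p q (s ++ u) := by
    have hp : s ++ u ∈ p.matches' ↔ s ++ t ++ u ∈ p.matches' := by
      rw [← derivs_matches'_iff p s u, ← derivs_matches'_iff p (s ++ t) u, hps]
    have hq : s ++ u ∈ q.matches' ↔ s ++ t ++ u ∈ q.matches' := by
      rw [← derivs_matches'_iff q s u, ← derivs_matches'_iff q (s ++ t) u, hqs]
    unfold Counterexample at hw ⊢
    rw [hp, hq]
    exact hw
  have hlt : (s ++ u).length < Nat.find hne := by
    rw [← hwlen]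
    simp only [List.length_append]
    have : 0 < t.length := List.length_pos_iff.mpr ht
    omega
  exact Nat.find_min hne hlt ⟨s ++ u, rfl, hsu⟩
end

section
/- For all regular expressions p and q over an alphabet Σ, the set of pairs of languages of their string derivatives, { (L(δ_w p), L(δ_w q)) | w a string over Σ }, is finite. -/
/-!
`L(δ_w p)` is the left quotient `w⁻¹ L(p)`, so it suffices that every language of a regular
expression has finitely many left quotients, i.e. is regular by Myhill–Nerode. This goes by
induction on the expression: the quotients of a finite language are sets of its suffixes, a
quotient of `L * M` is `w⁻¹L * M` plus a union of quotients of `M`, and a quotient of `L∗` by a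
nonempty word is a union of languages `v⁻¹L * L∗`.
-/

open RegularExpression

variable {α : Type*}

open Computability

namespace Language

variable (L M : Language α)

theorem leftQuotient_mul (w : List α) :
    (L * M).leftQuotient w =
      L.leftQuotient w * M + ⨆ v ∈ {v | ∃ u ∈ L, u ++ v = w}, M.leftQuotient v := by
  ext x
  simp only [mem_leftQuotient, mem_mul, mem_add, mem_iSup, Set.mem_ofPred_eq]
  constructor
  · rintro ⟨a, ha, b, hb, hab⟩
    rcases List.append_eq_append_iff.1 hab with ⟨v, rfl, rfl⟩ | ⟨y, rfl, rfl⟩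
    · exact .inr ⟨v, ⟨a, ha, rfl⟩, hb⟩
    · exact .inl ⟨y, ha, b, hb, rfl⟩
  · rintro (⟨y, hy, z, hz, rfl⟩ | ⟨v, ⟨u, hu, rfl⟩, hv⟩)
    · exact ⟨w ++ y, hy, z, hz, by simp⟩
    · exact ⟨u, hu, v ++ x, hv, by simp⟩

/-- `v ++ y` is the factor of `L` that the cut between `w` and `x` falls into. -/
theorem exists_split_of_append_mem_kstar {w x : List α} (hw : w ≠ []) (h : w ++ x ∈ L∗) :
    ∃ u v y z, u ∈ L∗ ∧ v ++ y ∈ L ∧ z ∈ L∗ ∧ w = u ++ v ∧ x = y ++ z ∧ v ≠ [] := by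
  obtain ⟨S, hS, hSL⟩ := mem_kstar.1 h
  clear h
  induction S generalizing w with
  | nil => simp_all
  | cons a S ih =>
    have ha : a ∈ L := hSL a (by simp)
    have hS_mem : S.flatten ∈ L∗ := join_mem_kstar fun y hy => hSL y (by simp [hy])
    rw [List.flatten_cons] at hS
    rcases List.append_eq_append_iff.1 hS with ⟨y, rfl, rfl⟩ | ⟨c, rfl, hc⟩
    · exact ⟨[], w, y, S.flatten, nil_mem_kstar L, ha, hS_mem, rfl, rfl, hw⟩
    rcases eq_or_ne c [] with rfl | hc_ne
    · exact ⟨[], a, [], x, nil_mem_kstar L, by simpa using ha, by simpa [hc] using hS_mem,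
        by simp, rfl, by simpa using hw⟩
    obtain ⟨u, v, y, z, hu, hvy, hz, rfl, rfl, hv⟩ :=
      ih hc_ne hc.symm fun y hy => hSL y (by simp [hy])
    have hau : a ++ u ∈ L∗ := mul_kstar_le_kstar (a := L) (append_mem_mul ha hu)
    exact ⟨a ++ u, v, y, z, hau, hvy, hz, by simp, rfl, hv⟩

theorem leftQuotient_kstar {w : List α} (hw : w ≠ []) :
    L∗.leftQuotient w =
      ⨆ v ∈ {v | v ≠ [] ∧ ∃ u ∈ L∗, u ++ v = w}, L.leftQuotient v * L∗ := by
  ext x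
  simp only [mem_leftQuotient, mem_iSup, Set.mem_ofPred_eq]
  constructor
  · intro h
    obtain ⟨u, v, y, z, hu, hvy, hz, rfl, rfl, hv⟩ := exists_split_of_append_mem_kstar L hw h
    exact ⟨v, ⟨hv, u, hu, rfl⟩, append_mem_mul hvy hz⟩
  · rintro ⟨v, ⟨-, u, hu, rfl⟩, hx⟩
    obtain ⟨y, hy, z, hz, rfl⟩ := mem_mul.1 hx
    have hvyz : v ++ y ++ z ∈ L∗ := mul_kstar_le_kstar (a := L) (append_mem_mul hy hz)
    rw [← kstar_mul_kstar L]
    simpa using append_mem_mul hu hvyz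

variable {L M}

theorem IsRegular.of_finite (h : (L : Set (List α)).Finite) : L.IsRegular := by
  rw [isRegular_iff_finite_range_leftQuotient]
  have hsuffixes : (⋃ w ∈ (L : Set (List α)), {y | y ∈ w.tails}).Finite :=
    h.biUnion fun w _ => w.tails.finite_toSet
  refine hsuffixes.finite_subsets.subset ?_
  rintro _ ⟨w, rfl⟩ y hy
  exact Set.mem_biUnion hy ((List.mem_tails _ _).2 (List.suffix_append w y))

theorem IsRegular.mul (hL : L.IsRegular) (hM : M.IsRegular) : (L * M).IsRegular := by
  rw [isRegular_iff_finite_range_leftQuotient] at *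
  refine (hL.image2 (fun A S => A * M + sSup S) hM.finite_subsets).subset ?_
  rintro _ ⟨w, rfl⟩
  refine ⟨_, ⟨w, rfl⟩, M.leftQuotient '' {v | ∃ u ∈ L, u ++ v = w},
    Set.image_subset_range _ _, ?_⟩
  rw [leftQuotient_mul, ← sSup_image]

theorem IsRegular.kstar (hL : L.IsRegular) : L∗.IsRegular := by
  rw [isRegular_iff_finite_range_leftQuotient] at *
  refine ((hL.finite_subsets.image fun S => sSup ((· * L∗) '' S)).insert L∗).subset ?_
  rintro _ ⟨w, rfl⟩
  rcases eq_or_ne w [] with rfl | hw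
  · exact .inl rfl
  refine .inr ⟨L.leftQuotient '' {v | v ≠ [] ∧ ∃ u ∈ L∗, u ++ v = w},
    Set.image_subset_range _ _, ?_⟩
  dsimp only
  rw [leftQuotient_kstar L hw, ← sSup_image, Set.image_image]

end Language

theorem RegularExpression.isRegular_matches' (P : RegularExpression α) : P.matches'.IsRegular := by
  induction P with
  | zero => exact .of_finite Set.finite_empty
  | epsilon => exact .of_finite (Set.finite_singleton [])
  | char a => exact .of_finite (Set.finite_singleton [a])
  | plus P Q hP hQ => exact hP.add hQ
  | comp P Q hP hQ => exact hP.mul hQ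
  | star P hP => exact hP.kstar

theorem rmatch_derivs [DecidableEq α] (p : RegularExpression α) (w x : List α) :
    (derivs p w).rmatch x = p.rmatch (w ++ x) := by
  induction w generalizing p with
  | nil => rfl
  | cons a w ih => exact ih (p.deriv a)

theorem matches'_derivs [DecidableEq α] (p : RegularExpression α) (w : List α) :
    (derivs p w).matches' = p.matches'.leftQuotient w := by
  ext x
  rw [Language.mem_leftQuotient, ← rmatch_iff_matches', ← rmatch_iff_matches', rmatch_derivs]

theorem finite_deriv_language_pairs [DecidableEq α] (p q : RegularExpression α) :
    (Set.range fun w : List α => ((derivs p w).matches', (derivs q w).matches')).Finite := by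
  refine (p.isRegular_matches'.finite_range_leftQuotient.prod
    q.isRegular_matches'.finite_range_leftQuotient).subset ?_
  rintro _ ⟨w, rfl⟩
  exact ⟨⟨w, (matches'_derivs p w).symm⟩, ⟨w, (matches'_derivs q w).symm⟩⟩
end
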